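/- For every graph G and every integer k ≥ 0, π*(G + K_k) = π*(G) + k, where G + K_k is the complete join of G with the complete graph on k vertices. -/

import Mathlib

/-- A *lazy walk* in `G` is a sequence of vertices in which any two consecutive vertices
are equal or adjacent. -/
def SimpleGraph.IsLazyWalk {V : Type*} (G : SimpleGraph V) (l : List V) : Prop :=
  l.Chain' fun a b => a = b ∨ G.Adj a b

/-- A colouring `φ` of `G` is *strongly nonrepetitive* if every `φ`-repetitive lazy walk
`v₀, …, v₂ₖ₋₁` (with `k ≥ 1`, repetitive meaning the first half of the colour sequence
equals the second half) has `vᵢ = vᵢ₊ₖ` for some `i < k`. -/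
def SimpleGraph.IsStronglyNonrepetitiveColouring {V α : Type*} (G : SimpleGraph V)
    (φ : V → α) : Prop :=
  ∀ (l : List V) (k : ℕ), G.IsLazyWalk l → 0 < k → l.length = 2 * k →
    (l.map φ).take k = (l.map φ).drop k → ∃ i < k, l[i]? = l[i + k]?

/-- `π*(G)`: the least `n` such that `G` has a strongly nonrepetitive colouring with
`n` colours. -/
noncomputable def SimpleGraph.strongNonrepChromNum {V : Type*} (G : SimpleGraph V) : ℕ :=
  sInf {n : ℕ | ∃ φ : V → Fin n, G.IsStronglyNonrepetitiveColouring φ}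

/-- The complete join `G + H` of two graphs: disjoint copies of `G` and `H` together with
all edges between them. -/
def SimpleGraph.graphJoin {α β : Type*} (G : SimpleGraph α) (H : SimpleGraph β) :
    SimpleGraph (α ⊕ β) where
  Adj x y :=
    match x, y with
    | Sum.inl a, Sum.inl a' => G.Adj a a'
    | Sum.inr b, Sum.inr b' => H.Adj b b'
    | Sum.inl _, Sum.inr _ => True
    | Sum.inr _, Sum.inl _ => True
  symm := ⟨by
    rintro (a | b) (a' | b') h
    · exact h.symm
    · trivial
    · trivial
    · exact h.symm⟩
  loopless := ⟨by
    rintro (a | b) h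
    · exact G.irrefl h
    · exact H.irrefl h⟩

/-!
Upper bound: extend an optimal colouring of `G` by giving the `k` apex vertices `k` fresh
colours. In a repetitive lazy walk, a visit to an apex forces the same apex `k` steps away or
before, since its colour occurs nowhere else; a walk avoiding the apexes is a lazy walk of `G`.

Lower bound: a strongly nonrepetitive colouring is proper (take the walk `u, v`). In the
join, the apexes are pairwise adjacent and adjacent to all of `G`, so they use `k` colours
that do not occur on `G`, and the restriction to `G` is still strongly nonrepetitive.
-/

namespace List

theorem take_eq_drop_iff_getElem? {α : Type*} {L : List α} {k : ℕ} (hL : L.length = 2 * k) :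
    L.take k = L.drop k ↔ ∀ i < k, L[i]? = L[i + k]? := by
  refine ⟨fun h i hi => ?_, fun h => List.ext_getElem? fun i => ?_⟩
  · simpa [List.getElem?_take, List.getElem?_drop, hi, Nat.add_comm] using congrArg (·[i]?) h
  · rw [List.getElem?_take, List.getElem?_drop]
    by_cases hi : i < k
    · rw [if_pos hi, h i hi, Nat.add_comm]
    · rw [if_neg hi, eq_comm, List.getElem?_eq_none]
      omega

theorem exists_map_inl_eq {α β : Type*} {l : List (α ⊕ β)} (hl : ∀ x ∈ l, x.isLeft) :
    ∃ l' : List α, l'.map Sum.inl = l :=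
  ⟨l.pmap Sum.getLeft hl, by simp [List.map_pmap]⟩

end List

theorem Sum.map_eq_inr_iff_of_injective {α β γ δ : Type*} {f : α → γ} {g : β → δ}
    (hg : Function.Injective g) {x : α ⊕ β} {b : β} :
    Sum.map f g x = Sum.inr (g b) ↔ x = Sum.inr b := by
  cases x <;> simp [hg.eq_iff]

namespace SimpleGraph

variable {V W α β : Type*} {G : SimpleGraph V} {H : SimpleGraph W}

def Embedding.graphJoinInl : G ↪g G.graphJoin H where
  toEmbedding := Function.Embedding.inl
  map_rel_iff' := Iff.rfl

theorem isLazyWalk_iff_isChain {l : List V} :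
    G.IsLazyWalk l ↔ l.IsChain fun a b => a = b ∨ G.Adj a b :=
  Iff.rfl

theorem IsLazyWalk.map (f : G →g H) {l : List V} (hl : G.IsLazyWalk l) :
    H.IsLazyWalk (l.map f) :=
  (List.isChain_map f).2 <| hl.imp fun {_ _} h => h.imp (congrArg f) f.map_adj

theorem Embedding.isLazyWalk_map_iff (f : G ↪g H) {l : List V} :
    H.IsLazyWalk (l.map f) ↔ G.IsLazyWalk l := by
  simp only [isLazyWalk_iff_isChain, List.isChain_map, f.injective.eq_iff, f.map_adj_iff]

namespace IsStronglyNonrepetitiveColouring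

theorem of_injective (G : SimpleGraph V) {φ : V → α} (hφ : Function.Injective φ) :
    G.IsStronglyNonrepetitiveColouring φ := by
  intro l k _ hk hlen hrep
  refine ⟨0, hk, ?_⟩
  have h := (List.take_eq_drop_iff_getElem? (by simpa using hlen)).1 hrep 0 hk
  simp only [List.getElem?_map] at h
  exact Option.map_injective hφ h

theorem of_comp {φ : V → α} {g : α → β}
    (h : G.IsStronglyNonrepetitiveColouring (g ∘ φ)) :
    G.IsStronglyNonrepetitiveColouring φ := by
  intro l k hl hk hlen hrep
  refine h l k hl hk hlen ?_
  rw [← List.map_map, ← List.map_take, ← List.map_drop, hrep]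

theorem comp_hom {ψ : W → α} (hψ : H.IsStronglyNonrepetitiveColouring ψ) (f : G →g H)
    (hf : Function.Injective f) : G.IsStronglyNonrepetitiveColouring (ψ ∘ f) := by
  intro l k hl hk hlen hrep
  obtain ⟨i, hi, h⟩ := hψ (l.map f) k (hl.map f) hk (by simpa using hlen)
    (by simpa [List.map_map] using hrep)
  simp only [List.getElem?_map] at h
  exact ⟨i, hi, Option.map_injective hf h⟩

theorem ne_of_adj {φ : V → α} (hφ : G.IsStronglyNonrepetitiveColouring φ) {u v : V}
    (huv : G.Adj u v) : φ u ≠ φ v := by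
  intro h
  obtain ⟨i, hi, hEq⟩ :=
    hφ [u, v] 1 (isLazyWalk_iff_isChain.2 (by simp [huv])) one_pos rfl (by simp [h])
  obtain rfl : i = 0 := by omega
  exact huv.ne (by simpa using hEq)

theorem graphJoin_sumMap {φ : V → α} {χ : W → β}
    (hφ : G.IsStronglyNonrepetitiveColouring φ) (hχ : Function.Injective χ) :
    (G.graphJoin H).IsStronglyNonrepetitiveColouring (Sum.map φ χ) := by
  intro l k hl hk hlen hrep
  by_cases hR : ∃ (j : ℕ) (b : W), l[j]? = some (Sum.inr b)
  · obtain ⟨j, b, hj⟩ := hR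
    have hrep' := (List.take_eq_drop_iff_getElem? (by simpa using hlen)).1 hrep
    simp only [List.getElem?_map] at hrep'
    have hcol : ∀ {o o' : Option (V ⊕ W)}, o.map (Sum.map φ χ) = o'.map (Sum.map φ χ) →
        o = some (Sum.inr b) → o' = some (Sum.inr b) := by
      rintro o o' h rfl
      obtain ⟨x, hx, hxb⟩ := Option.map_eq_some_iff.1 h.symm
      exact hx.trans (congrArg some ((Sum.map_eq_inr_iff_of_injective hχ).1 hxb))
    have hj2 : j < 2 * k := hlen ▸ (List.getElem?_eq_some_iff.1 hj).1
    obtain ⟨i, hi, rfl | rfl⟩ : ∃ i < k, i = j ∨ i + k = j :=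
      if hjk : j < k then ⟨j, hjk, .inl rfl⟩ else ⟨j - k, by omega, .inr (by omega)⟩
    · exact ⟨i, hi, hj.trans (hcol (hrep' i hi) hj).symm⟩
    · exact ⟨i, hi, (hcol (hrep' i hi).symm hj).trans hj.symm⟩
  · push Not at hR
    obtain ⟨l', rfl⟩ := List.exists_map_inl_eq fun x hx => by
      obtain ⟨j, hj⟩ := List.mem_iff_getElem?.1 hx
      cases x with
      | inl => rfl
      | inr b => exact absurd hj (hR j b)
    have hrep' : (l'.map φ).take k = (l'.map φ).drop k := by
      rw [show (l'.map Sum.inl).map (Sum.map φ χ) = (l'.map φ).map Sum.inl by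
        simp [Function.comp_def], ← List.map_take, ← List.map_drop] at hrep
      exact List.map_injective_iff.2 Sum.inl_injective hrep
    obtain ⟨i, hi, h⟩ := hφ l' k (Embedding.graphJoinInl.isLazyWalk_map_iff.1 hl) hk
      (by simpa using hlen) hrep'
    exact ⟨i, hi, by simp [List.getElem?_map, h]⟩

end IsStronglyNonrepetitiveColouring

theorem strongNonrepChromNum_le_card [Fintype α] {φ : V → α}
    (hφ : G.IsStronglyNonrepetitiveColouring φ) : G.strongNonrepChromNum ≤ Fintype.card α := by
  let e := Fintype.equivFin α
  refine Nat.sInf_le ⟨e ∘ φ, IsStronglyNonrepetitiveColouring.of_comp (g := e.symm) ?_⟩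
  simpa [Function.comp_def] using hφ

theorem exists_strongNonrepColouring_fin [Finite V] (G : SimpleGraph V) :
    ∃ φ : V → Fin G.strongNonrepChromNum, G.IsStronglyNonrepetitiveColouring φ := by
  obtain ⟨n, ⟨e⟩⟩ := Finite.exists_equiv_fin V
  exact Nat.sInf_mem (s := {n | ∃ φ : V → Fin n, G.IsStronglyNonrepetitiveColouring φ})
    ⟨n, e, .of_injective G e.injective⟩

theorem strongNonrepChromNum_add_card_le [Fintype W] [Fintype α] {ψ : V ⊕ W → α}
    (hψ : (G.graphJoin (⊤ : SimpleGraph W)).IsStronglyNonrepetitiveColouring ψ) :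
    G.strongNonrepChromNum + Fintype.card W ≤ Fintype.card α := by
  classical
  set S := Finset.univ.image (ψ ∘ Sum.inr)
  have hS : S.card = Fintype.card W :=
    Finset.card_image_of_injective _ fun a b hab => by
      by_contra hne
      exact hψ.ne_of_adj (u := Sum.inr a) (v := Sum.inr b) hne hab
  have hSc (v : V) : ψ (Sum.inl v) ∈ Sᶜ := Finset.mem_compl.2 fun hv => by
    obtain ⟨j, -, hj⟩ := Finset.mem_image.1 hv
    exact hψ.ne_of_adj (u := Sum.inl v) (v := Sum.inr j) trivial hj.symm
  have hG : G.IsStronglyNonrepetitiveColouring fun v => (⟨ψ (Sum.inl v), hSc v⟩ : ↥Sᶜ) :=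
    (hψ.comp_hom Embedding.graphJoinInl.toHom Sum.inl_injective).of_comp (g := Subtype.val)
  calc G.strongNonrepChromNum + Fintype.card W ≤ (Sᶜ : Finset α).card + S.card := by
        rw [hS, ← Fintype.card_coe]
        exact Nat.add_le_add_right (strongNonrepChromNum_le_card hG) _
    _ = Fintype.card α := Finset.card_compl_add_card S

end SimpleGraph

/-- For every graph `G` and every `k ≥ 0`, `π*(G + Kₖ) = π*(G) + k`, where `G + Kₖ`
is the complete join of `G` with the complete graph on `k` vertices. -/
theorem strongNonrepChromNum_graphJoin_completeGraph (V : Type) [Fintype V]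
    (G : SimpleGraph V) (k : ℕ) :
    (G.graphJoin (⊤ : SimpleGraph (Fin k))).strongNonrepChromNum =
      G.strongNonrepChromNum + k := by
  obtain ⟨φ, hφ⟩ := G.exists_strongNonrepColouring_fin
  obtain ⟨ψ, hψ⟩ := (G.graphJoin (⊤ : SimpleGraph (Fin k))).exists_strongNonrepColouring_fin
  refine le_antisymm ?_ ?_
  · have hJ := hφ.graphJoin_sumMap (H := (⊤ : SimpleGraph (Fin k))) Function.injective_id
    simpa using SimpleGraph.strongNonrepChromNum_le_card hJ
  · simpa using SimpleGraph.strongNonrepChromNum_add_card_le hψ
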